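/- Let m ≥ 2 be an integer, κ ∈ ℝ, λ > 0, and R > 0 with √κ·R < π when κ > 0. Let u : [0,R] → ℝ be smooth (the restriction of a C^∞ function on an open interval containing [0,R]) with u'(0) = 0, satisfying the ODE u''(r) + (m−1)·(sn_κ'(r)/sn_κ(r))·u'(r) = −λ·u(r) for all r ∈ (0,R). Then (m·(sn_κ'(r)/sn_κ(r))·u'(r) + λ·u(r)) / sn_κ(r)² → −λ·(λ − κ·m)·u(0)/(m·(m+2)) as r → 0⁺. -/

import Mathlib

open Set Filter

/-- The generalized sine function `sn_κ` of the simply connected space form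
of constant sectional curvature `κ`. -/
noncomputable def sn (κ : ℝ) : ℝ → ℝ := fun r =>
  if 0 < κ then Real.sin (Real.sqrt κ * r) / Real.sqrt κ
  else if κ = 0 then r
  else Real.sinh (Real.sqrt (-κ) * r) / Real.sqrt (-κ)

noncomputable def cs (κ : ℝ) : ℝ → ℝ := fun r =>
  if 0 < κ then Real.cos (Real.sqrt κ * r)
  else if κ = 0 then 1
  else Real.cosh (Real.sqrt (-κ) * r)

lemma sn_hasDerivAt (κ r : ℝ) : HasDerivAt (sn κ) (cs κ r) r := by
  rcases lt_trichotomy 0 κ with hκ | hκ | hκ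
  · have hs : Real.sqrt κ ≠ 0 := ne_of_gt (Real.sqrt_pos.2 hκ)
    have e : sn κ = fun x => Real.sin (Real.sqrt κ * x) / Real.sqrt κ := by
      funext x; simp [sn, hκ]
    have e2 : cs κ r = Real.cos (Real.sqrt κ * r) := by simp [cs, hκ]
    rw [e, e2]
    have h1 : HasDerivAt (fun x : ℝ => Real.sqrt κ * x) (Real.sqrt κ) r := by
      simpa using (hasDerivAt_id r).const_mul (Real.sqrt κ)
    have := ((Real.hasDerivAt_sin (Real.sqrt κ * r)).comp r h1).div_const (Real.sqrt κ)
    refine this.congr_deriv ?_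
    field_simp
  · subst hκ
    have e : sn 0 = fun x : ℝ => x := by funext x; simp [sn]
    have e2 : cs 0 r = 1 := by simp [cs]
    rw [e, e2]
    exact hasDerivAt_id r
  · have hs : Real.sqrt (-κ) ≠ 0 := ne_of_gt (Real.sqrt_pos.2 (by linarith))
    have e : sn κ = fun x => Real.sinh (Real.sqrt (-κ) * x) / Real.sqrt (-κ) := by
      funext x; simp [sn, not_lt.2 hκ.le, ne_of_lt hκ]
    have e2 : cs κ r = Real.cosh (Real.sqrt (-κ) * r) := by
      simp [cs, not_lt.2 hκ.le, ne_of_lt hκ]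
    rw [e, e2]
    have h1 : HasDerivAt (fun x : ℝ => Real.sqrt (-κ) * x) (Real.sqrt (-κ)) r := by
      simpa using (hasDerivAt_id r).const_mul (Real.sqrt (-κ))
    have := ((Real.hasDerivAt_sinh (Real.sqrt (-κ) * r)).comp r h1).div_const (Real.sqrt (-κ))
    refine this.congr_deriv ?_
    field_simp

lemma cs_hasDerivAt (κ r : ℝ) : HasDerivAt (cs κ) (-κ * sn κ r) r := by
  rcases lt_trichotomy 0 κ with hκ | hκ | hκ
  · have hs : Real.sqrt κ ≠ 0 := ne_of_gt (Real.sqrt_pos.2 hκ)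
    have hss : Real.sqrt κ * Real.sqrt κ = κ := Real.mul_self_sqrt hκ.le
    have e : cs κ = fun x => Real.cos (Real.sqrt κ * x) := by funext x; simp [cs, hκ]
    have e2 : sn κ r = Real.sin (Real.sqrt κ * r) / Real.sqrt κ := by simp [sn, hκ]
    rw [e, e2]
    have h1 : HasDerivAt (fun x : ℝ => Real.sqrt κ * x) (Real.sqrt κ) r := by
      simpa using (hasDerivAt_id r).const_mul (Real.sqrt κ)
    have := (Real.hasDerivAt_cos (Real.sqrt κ * r)).comp r h1
    refine this.congr_deriv ?_
    field_simp
    linear_combination (-Real.sin (Real.sqrt κ * r)) * hss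
  · subst hκ
    have e : cs 0 = fun _ : ℝ => (1:ℝ) := by funext x; simp [cs]
    rw [e]
    simpa using hasDerivAt_const r (1:ℝ)
  · have hs : Real.sqrt (-κ) ≠ 0 := ne_of_gt (Real.sqrt_pos.2 (by linarith))
    have hss : Real.sqrt (-κ) * Real.sqrt (-κ) = -κ := Real.mul_self_sqrt (by linarith)
    have e : cs κ = fun x => Real.cosh (Real.sqrt (-κ) * x) := by
      funext x; simp [cs, not_lt.2 hκ.le, ne_of_lt hκ]
    have e2 : sn κ r = Real.sinh (Real.sqrt (-κ) * r) / Real.sqrt (-κ) := by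
      simp [sn, not_lt.2 hκ.le, ne_of_lt hκ]
    rw [e, e2]
    have h1 : HasDerivAt (fun x : ℝ => Real.sqrt (-κ) * x) (Real.sqrt (-κ)) r := by
      simpa using (hasDerivAt_id r).const_mul (Real.sqrt (-κ))
    have := (Real.hasDerivAt_cosh (Real.sqrt (-κ) * r)).comp r h1
    refine this.congr_deriv ?_
    field_simp
    linear_combination (Real.sinh (Real.sqrt (-κ) * r)) * hss

lemma sn_zero (κ : ℝ) : sn κ 0 = 0 := by
  unfold sn; split_ifs <;> simp

lemma cs_zero (κ : ℝ) : cs κ 0 = 1 := by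
  unfold cs; split_ifs <;> simp

lemma pyth (κ r : ℝ) : cs κ r ^ 2 + κ * sn κ r ^ 2 = 1 := by
  unfold sn cs
  rcases lt_trichotomy 0 κ with hκ | hκ | hκ
  · simp only [if_pos hκ]
    have hss : Real.sqrt κ ^ 2 = κ := Real.sq_sqrt hκ.le
    have hs : Real.sqrt κ ≠ 0 := ne_of_gt (Real.sqrt_pos.2 hκ)
    have h1 := Real.sin_sq_add_cos_sq (Real.sqrt κ * r)
    field_simp
    rw [hss]; linear_combination κ * h1
  · simp [← hκ]
  · simp only [if_neg (by linarith : ¬ 0 < κ), if_neg (by linarith : κ ≠ 0)]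
    have hss : Real.sqrt (-κ) ^ 2 = -κ := Real.sq_sqrt (by linarith)
    have hs : Real.sqrt (-κ) ≠ 0 := ne_of_gt (Real.sqrt_pos.2 (by linarith))
    have h1 := Real.cosh_sq_sub_sinh_sq (Real.sqrt (-κ) * r)
    field_simp
    nlinarith [h1, hss]

set_option maxHeartbeats 1000000 in
/-- the quantity `(m (sn_κ'/sn_κ) u' + λ u) / sn_κ²` tends to
`-λ(λ - κ m) u(0) / (m (m+2))` as `r → 0⁺`. -/
theorem stmt5 (m : ℕ) (hm : 2 ≤ m) (κ lam R a b : ℝ)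
    (hlam : 0 < lam) (hR : 0 < R)
    (hκR : 0 < κ → Real.sqrt κ * R < Real.pi)
    (ha : a < 0) (hb : R < b)
    (u : ℝ → ℝ) (hu : ContDiffOn ℝ (⊤ : ℕ∞) u (Set.Ioo a b))
    (hu'0 : deriv u 0 = 0)
    (hode : ∀ r ∈ Set.Ioo (0:ℝ) R,
      deriv (deriv u) r + ((m : ℝ) - 1) * (deriv (sn κ) r / sn κ r) * deriv u r
        = -lam * u r) :
    Filter.Tendsto
      (fun r => ((m : ℝ) * (deriv (sn κ) r / sn κ r) * deriv u r + lam * u r) / (sn κ r) ^ 2)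
      (nhdsWithin 0 (Set.Ioi 0))
      (nhds (-(lam * (lam - κ * (m : ℝ)) * u 0) / ((m : ℝ) * ((m : ℝ) + 2)))) := by
  have hI : IsOpen (Ioo a b) := isOpen_Ioo
  have h0I : (0:ℝ) ∈ Ioo a b := ⟨ha, by linarith⟩
  have hm0 : (0:ℝ) < (m:ℝ) := by exact_mod_cast Nat.lt_of_lt_of_le (by norm_num) hm
  have hm1 : (m:ℝ) - 1 ≠ 0 := by
    have : (2:ℝ) ≤ (m:ℝ) := by exact_mod_cast hm
    linarith
  have hm2 : (m:ℝ) + 2 ≠ 0 := by linarith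
  set l := nhdsWithin (0:ℝ) (Set.Ioi 0) with hl
  set u1 := deriv u with hu1def
  set u2 := deriv u1 with hu2def
  set u3 := deriv u2 with hu3def
  set u4 := deriv u3 with hu4def
  -- smoothness chain
  have step : ∀ f : ℝ → ℝ, ContDiffOn ℝ (⊤ : ℕ∞) f (Ioo a b) →
      (∀ r ∈ Ioo a b, HasDerivAt f (deriv f r) r) ∧
        ContDiffOn ℝ (⊤ : ℕ∞) (deriv f) (Ioo a b) := by
    intro f hf
    have hdf := (contDiffOn_infty_iff_deriv_of_isOpen hI).1 hf
    exact ⟨fun r hr => (hdf.1.differentiableAt (hI.mem_nhds hr)).hasDerivAt, hdf.2⟩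
  have hu0s : ContDiffOn ℝ (⊤ : ℕ∞) u (Ioo a b) := hu.of_le (by simp)
  obtain ⟨hu_d, hu1s⟩ := step u hu0s
  obtain ⟨hu1_d, hu2s⟩ := step u1 hu1s
  obtain ⟨hu2_d, hu3s⟩ := step u2 hu2s
  obtain ⟨hu3_d, hu4s⟩ := step u3 hu3s
  -- continuity at 0 along l
  have hcont : ∀ f : ℝ → ℝ, (∀ r ∈ Ioo a b, HasDerivAt f (deriv f r) r) →
      Tendsto f l (nhds (f 0)) := by
    intro f hf
    exact ((hf 0 h0I).differentiableAt.continuousAt.tendsto).mono_left nhdsWithin_le_nhds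
  have c_u : Tendsto u l (nhds (u 0)) := hcont u hu_d
  have c_u1 : Tendsto u1 l (nhds 0) := by
    have := hcont u1 hu1_d
    rwa [show u1 0 = 0 from hu'0] at this
  have c_u2 : Tendsto u2 l (nhds (u2 0)) := hcont u2 hu2_d
  have c_u3 : Tendsto u3 l (nhds (u3 0)) := hcont u3 hu3_d
  have c_u4 : Tendsto u4 l (nhds (u4 0)) := by
    have : ContinuousAt u4 0 := (hu4s.continuousOn.continuousAt (hI.mem_nhds h0I))
    exact this.tendsto.mono_left nhdsWithin_le_nhds
  -- slope limits
  have hslope : ∀ (f : ℝ → ℝ) (d : ℝ), HasDerivAt f d 0 →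
      Tendsto (fun r => (f r - f 0) / r) l (nhds d) := by
    intro f d hfd
    have h1 := hasDerivAt_iff_tendsto_slope.1 hfd
    have h2 : Tendsto (slope f 0) l (nhds d) :=
      h1.mono_left (nhdsWithin_mono 0 (fun x hx => by simpa using ne_of_gt hx))
    refine h2.congr (fun r => ?_)
    simp [slope_def_field]
  have s_u1 : Tendsto (fun r => u1 r / r) l (nhds (u2 0)) := by
    have := hslope u1 (u2 0) (hu1_d 0 h0I)
    simpa [hu'0] using this
  have s_u2 : Tendsto (fun r => (u2 r - u2 0) / r) l (nhds (u3 0)) :=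
    hslope u2 (u3 0) (hu2_d 0 h0I)
  have s_u3 : Tendsto (fun r => (u3 r - u3 0) / r) l (nhds (u4 0)) :=
    hslope u3 (u4 0) (hu3_d 0 h0I)
  -- sn limits
  have c_cs : Tendsto (fun r => cs κ r) l (nhds 1) := by
    have : ContinuousAt (cs κ) 0 := (cs_hasDerivAt κ 0).differentiableAt.continuousAt
    have := this.tendsto.mono_left (nhdsWithin_le_nhds : l ≤ nhds 0)
    rwa [cs_zero] at this
  have c_sn : Tendsto (fun r => sn κ r) l (nhds 0) := by
    have : ContinuousAt (sn κ) 0 := (sn_hasDerivAt κ 0).differentiableAt.continuousAt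
    have := this.tendsto.mono_left (nhdsWithin_le_nhds : l ≤ nhds 0)
    rwa [sn_zero] at this
  have s_sn : Tendsto (fun r => sn κ r / r) l (nhds 1) := by
    have := hslope (sn κ) (cs κ 0) (sn_hasDerivAt κ 0)
    rw [cs_zero] at this
    simpa [sn_zero] using this
  -- eventual facts
  have ev_pos : ∀ᶠ r in l, 0 < r := eventually_mem_nhdsWithin
  have ev_sn_pos : ∀ᶠ r in l, 0 < sn κ r := by
    have h1 : ∀ᶠ r in l, (1:ℝ)/2 < sn κ r / r := s_sn.eventually (eventually_gt_nhds (by norm_num))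
    filter_upwards [h1, ev_pos] with r h1 h2
    by_contra hcon
    push_neg at hcon
    have : sn κ r / r ≤ 0 := div_nonpos_of_nonpos_of_nonneg hcon h2.le
    linarith
  have ev_cs_pos : ∀ᶠ r in l, 0 < cs κ r := by
    have h1 : ∀ᶠ r in l, (1:ℝ)/2 < cs κ r := c_cs.eventually (eventually_gt_nhds (by norm_num))
    filter_upwards [h1] with r h1; linarith
  have ev_IR : ∀ᶠ r in l, r ∈ Ioo (0:ℝ) R := by
    rw [hl]
    exact Ioo_mem_nhdsGT_of_mem (by constructor <;> [exact le_refl 0; exact hR])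
  -- extract an explicit interval E = Ioo 0 ε
  obtain ⟨ε, hεmem, hεsub⟩ := mem_nhdsGT_iff_exists_Ioo_subset.1
    (ev_IR.and (ev_sn_pos.and ev_cs_pos) : _)
  have hε : (0:ℝ) < ε := hεmem
  have hE_l : Ioo (0:ℝ) ε ∈ l := Ioo_mem_nhdsGT_of_mem ⟨le_refl 0, hε⟩
  have hEab : ∀ r ∈ Ioo (0:ℝ) ε, r ∈ Ioo a b := by
    intro r hr
    have := (hεsub hr).1
    exact ⟨by linarith [this.1], by linarith [this.2]⟩
  have hE_sn : ∀ r ∈ Ioo (0:ℝ) ε, 0 < sn κ r := fun r hr => (hεsub hr).2.1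
  have hE_cs : ∀ r ∈ Ioo (0:ℝ) ε, 0 < cs κ r := fun r hr => (hεsub hr).2.2
  have hE_R : ∀ r ∈ Ioo (0:ℝ) ε, r ∈ Ioo 0 R := fun r hr => (hεsub hr).1
  -- the auxiliary functions
  set φ : ℝ → ℝ := fun r => (-(lam * u r) - u2 r) / ((m:ℝ) - 1) with hφdef
  set φ' : ℝ → ℝ := fun r => (-(lam * u1 r) - u3 r) / ((m:ℝ) - 1) with hφ'def
  set φ'' : ℝ → ℝ := fun r => (-(lam * u2 r) - u4 r) / ((m:ℝ) - 1) with hφ''def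
  have hφ_d : ∀ r ∈ Ioo a b, HasDerivAt φ (φ' r) r := by
    intro r hr
    have h := (((hu_d r hr).const_mul lam).neg.sub (hu2_d r hr)).div_const ((m:ℝ) - 1)
    rw [← hu1def, ← hu3def] at h
    simp only [hφdef, hφ'def]
    exact h
  have hφ'_d : ∀ r ∈ Ioo a b, HasDerivAt φ' (φ'' r) r := by
    intro r hr
    have h := (((hu1_d r hr).const_mul lam).neg.sub (hu3_d r hr)).div_const ((m:ℝ) - 1)
    rw [← hu2def, ← hu4def] at h
    simp only [hφ'def, hφ''def]
    exact h
  -- the ODE rearranged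
  have hodeE : ∀ r ∈ Ioo (0:ℝ) ε, (cs κ r / sn κ r) * u1 r = φ r := by
    intro r hr
    have h1 := hode r (hE_R r hr)
    rw [show deriv (sn κ) r = cs κ r from (sn_hasDerivAt κ r).deriv] at h1
    have hsnne : sn κ r ≠ 0 := ne_of_gt (hE_sn r hr)
    rw [hφdef]
    field_simp at h1 ⊢
    linarith [h1]
  have id1 : ∀ r ∈ Ioo (0:ℝ) ε, u1 r = φ r * (sn κ r / cs κ r) := by
    intro r hr
    have h1 := hodeE r hr
    have hsnne : sn κ r ≠ 0 := ne_of_gt (hE_sn r hr)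
    have hcsne : cs κ r ≠ 0 := ne_of_gt (hE_cs r hr)
    field_simp at h1 ⊢
    linarith [h1]
  -- derivative helpers at points where cs ≠ 0
  have hψ_d : ∀ r : ℝ, cs κ r ≠ 0 →
      HasDerivAt (fun x => sn κ x / cs κ x) (((cs κ r)^2)⁻¹) r := by
    intro r hcsne
    have h := (sn_hasDerivAt κ r).div (cs_hasDerivAt κ r) hcsne
    refine h.congr_deriv ?_
    have hp := pyth κ r
    field_simp
    linarith [hp]
  have hinv_d : ∀ r : ℝ, cs κ r ≠ 0 →
      HasDerivAt (fun x => ((cs κ x)^2)⁻¹) (2*κ*(sn κ r/(cs κ r)^3)) r := by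
    intro r hcsne
    have h := ((cs_hasDerivAt κ r).pow 2).inv (pow_ne_zero 2 hcsne)
    refine h.congr_deriv ?_
    simp only [Pi.pow_apply]
    field_simp
    ring
  -- second identity: differentiate id1 on E
  have id2 : ∀ r ∈ Ioo (0:ℝ) ε,
      u2 r = φ' r * (sn κ r / cs κ r) + φ r * ((cs κ r)^2)⁻¹ := by
    intro r hr
    have hrab := hEab r hr
    have hcsne : cs κ r ≠ 0 := ne_of_gt (hE_cs r hr)
    have hg : HasDerivAt (fun x => φ x * (sn κ x / cs κ x))
        (φ' r * (sn κ r / cs κ r) + φ r * ((cs κ r)^2)⁻¹) r := by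
      exact (hφ_d r hrab).mul (hψ_d r hcsne)
    have heq : u1 =ᶠ[nhds r] (fun x => φ x * (sn κ x / cs κ x)) :=
      eventually_of_mem (isOpen_Ioo.mem_nhds hr) (fun x hx => id1 x hx)
    have h2 : HasDerivAt u1 (φ' r * (sn κ r / cs κ r) + φ r * ((cs κ r)^2)⁻¹) r :=
      hg.congr_of_eventuallyEq heq
    have := (hu1_d r hrab).unique h2
    rw [hu2def]
    exact this
  -- third identity: differentiate id2 on E
  have id3 : ∀ r ∈ Ioo (0:ℝ) ε,
      u3 r = φ'' r * (sn κ r / cs κ r) + 2 * φ' r * ((cs κ r)^2)⁻¹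
        + φ r * (2*κ*(sn κ r/(cs κ r)^3)) := by
    intro r hr
    have hrab := hEab r hr
    have hcsne : cs κ r ≠ 0 := ne_of_gt (hE_cs r hr)
    have hg : HasDerivAt (fun x => φ' x * (sn κ x / cs κ x) + φ x * ((cs κ x)^2)⁻¹)
        (φ'' r * (sn κ r / cs κ r) + 2 * φ' r * ((cs κ r)^2)⁻¹
          + φ r * (2*κ*(sn κ r/(cs κ r)^3))) r := by
      have := ((hφ'_d r hrab).mul (hψ_d r hcsne)).add ((hφ_d r hrab).mul (hinv_d r hcsne))
      refine this.congr_deriv ?_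
      ring
    have heq : u2 =ᶠ[nhds r] (fun x => φ' x * (sn κ x / cs κ x) + φ x * ((cs κ x)^2)⁻¹) :=
      eventually_of_mem (isOpen_Ioo.mem_nhds hr) (fun x hx => id2 x hx)
    have h2 := hg.congr_of_eventuallyEq heq
    have := (hu2_d r hrab).unique h2
    rw [hu3def]
    exact this
  haveI hlneBot : l.NeBot := by rw [hl]; infer_instance
  -- more basic limits
  have s_r_sn : Tendsto (fun r => r / sn κ r) l (nhds 1) := by
    have h := s_sn.inv₀ one_ne_zero
    rw [inv_one] at h
    refine h.congr' ?_
    filter_upwards [ev_pos, ev_sn_pos] with r h1 h2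
    rw [inv_div]
  have c_φ : Tendsto φ l (nhds (φ 0)) := by
    have : ContinuousAt φ 0 := (hφ_d 0 h0I).differentiableAt.continuousAt
    exact this.tendsto.mono_left nhdsWithin_le_nhds
  have c_φ' : Tendsto φ' l (nhds (φ' 0)) := by
    have : ContinuousAt φ' 0 := (hφ'_d 0 h0I).differentiableAt.continuousAt
    exact this.tendsto.mono_left nhdsWithin_le_nhds
  have c_φ'' : Tendsto φ'' l (nhds (φ'' 0)) := by
    have h1 : Tendsto (fun r => (-(lam * u2 r) - u4 r) / ((m:ℝ)-1)) l
        (nhds ((-(lam * u2 0) - u4 0) / ((m:ℝ)-1))) :=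
      ((c_u2.const_mul lam).neg.sub c_u4).div_const _
    exact h1
  have s_φ : Tendsto (fun r => (φ r - φ 0)/r) l (nhds (φ' 0)) := hslope φ (φ' 0) (hφ_d 0 h0I)
  have s_φ' : Tendsto (fun r => (φ' r - φ' 0)/r) l (nhds (φ'' 0)) := hslope φ' (φ'' 0) (hφ'_d 0 h0I)
  have c_cs_inv : Tendsto (fun r => (cs κ r)⁻¹) l (nhds 1) := by
    have := c_cs.inv₀ one_ne_zero; rwa [inv_one] at this
  have c_cs_sq_inv : Tendsto (fun r => ((cs κ r)^2)⁻¹) l (nhds 1) := by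
    have := (c_cs.pow 2).inv₀ (by norm_num); rwa [one_pow, inv_one] at this
  have c_cs_cube_inv : Tendsto (fun r => ((cs κ r)^3)⁻¹) l (nhds 1) := by
    have := (c_cs.pow 3).inv₀ (by norm_num); rwa [one_pow, inv_one] at this
  -- fact p : m * u2 0 = -(lam * u 0)
  have fact_p : (m:ℝ) * u2 0 = -(lam * u 0) := by
    have hLHS : Tendsto (fun r => u2 r + ((m:ℝ)-1) * ((cs κ r * (r / sn κ r)) * (u1 r / r))) l
        (nhds (u2 0 + ((m:ℝ)-1) * ((1 * 1) * u2 0))) :=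
      c_u2.add ((((c_cs.mul s_r_sn)).mul s_u1).const_mul _)
    have hLHS' : Tendsto (fun r => -lam * u r) l
        (nhds (u2 0 + ((m:ℝ)-1) * ((1 * 1) * u2 0))) := by
      refine hLHS.congr' ?_
      filter_upwards [hE_l] with r hr
      have h1 := hode r (hE_R r hr)
      rw [show deriv (sn κ) r = cs κ r from (sn_hasDerivAt κ r).deriv] at h1
      have hrne : r ≠ 0 := ne_of_gt hr.1
      have hsnne : sn κ r ≠ 0 := ne_of_gt (hE_sn r hr)
      rw [← h1]
      field_simp
    have hRHS : Tendsto (fun r => -lam * u r) l (nhds (-lam * u 0)) := c_u.const_mul _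
    have := tendsto_nhds_unique hLHS' hRHS
    linarith [this]
  have hφ0 : φ 0 = u2 0 := by
    show (-(lam * u 0) - u2 0) / ((m:ℝ)-1) = u2 0
    field_simp
    linarith [fact_p]
  -- fact : u3 0 = 0
  have fact_t3 : u3 0 = 0 := by
    have hG : Tendsto (fun r => φ' r * ((sn κ r / r) * (cs κ r)⁻¹)
        + ((φ r - φ 0)/r) * ((cs κ r)^2)⁻¹
        + (u2 0 * κ) * ((sn κ r / r) * (sn κ r / (cs κ r)^2))) l
        (nhds (φ' 0 * (1 * 1) + φ' 0 * 1 + (u2 0 * κ) * (1 * (0 / 1^2)))) := by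
      refine ((c_φ'.mul (s_sn.mul c_cs_inv)).add (s_φ.mul c_cs_sq_inv)).add ?_
      exact (s_sn.mul (c_sn.div (c_cs.pow 2) (by norm_num))).const_mul _
    have hG' : Tendsto (fun r => (u2 r - u2 0)/r) l
        (nhds (φ' 0 * (1 * 1) + φ' 0 * 1 + (u2 0 * κ) * (1 * (0 / 1^2)))) := by
      refine hG.congr' ?_
      filter_upwards [hE_l] with r hr
      have e := id2 r hr
      have hrne : r ≠ 0 := ne_of_gt hr.1
      have hcsne : cs κ r ≠ 0 := ne_of_gt (hE_cs r hr)
      have hp := pyth κ r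
      rw [e, hφ0]
      field_simp
      linear_combination (u2 0) * hp
    have huniq := tendsto_nhds_unique hG' s_u2
    -- u3 0 = 2 * φ' 0, and φ' 0 = -(u3 0)/(m-1)
    have hφ'0 : φ' 0 = -(u3 0) / ((m:ℝ)-1) := by
      show (-(lam * u1 0) - u3 0) / ((m:ℝ)-1) = -(u3 0) / ((m:ℝ)-1)
      rw [hu'0]
      ring_nf
    rw [hφ'0] at huniq
    norm_num at huniq
    field_simp at huniq
    have h3 : u3 0 * (((m:ℝ)-1) * ((m:ℝ)+1)) = 0 := by linear_combination -((m:ℝ)-1) * huniq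
    have h4 : ((m:ℝ)+1) ≠ 0 := by positivity
    exact (mul_eq_zero.mp h3).resolve_right (mul_ne_zero hm1 h4)
  -- fact q
  have hφ'0z : φ' 0 = 0 := by
    show (-(lam * u1 0) - u3 0) / ((m:ℝ)-1) = 0
    rw [hu'0, fact_t3]; norm_num
  have s_u3' : Tendsto (fun r => u3 r / r) l (nhds (u4 0)) := by
    have := s_u3; rw [fact_t3] at this; simpa using this
  have fact_q : ((m:ℝ)+2) * u4 0 = (2*κ*((m:ℝ)-1) - 3*lam) * u2 0 := by
    have hG2 : Tendsto (fun r => φ'' r * ((sn κ r / r) * (cs κ r)⁻¹)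
        + 2 * ((φ' r - φ' 0)/r) * ((cs κ r)^2)⁻¹
        + 2*κ*φ r * ((sn κ r / r) * ((cs κ r)^3)⁻¹)) l
        (nhds (φ'' 0 * (1 * 1) + 2 * φ'' 0 * 1 + 2*κ*φ 0 * (1 * 1))) := by
      refine ((c_φ''.mul (s_sn.mul c_cs_inv)).add ((s_φ'.const_mul 2).mul c_cs_sq_inv)).add ?_
      exact (c_φ.const_mul (2*κ)).mul (s_sn.mul c_cs_cube_inv)
    have hG2' : Tendsto (fun r => u3 r / r) l
        (nhds (φ'' 0 * (1 * 1) + 2 * φ'' 0 * 1 + 2*κ*φ 0 * (1 * 1))) := by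
      refine hG2.congr' ?_
      filter_upwards [hE_l] with r hr
      have e := id3 r hr
      have hrne : r ≠ 0 := ne_of_gt hr.1
      have hcsne : cs κ r ≠ 0 := ne_of_gt (hE_cs r hr)
      rw [hφ'0z, e]
      field_simp
      ring
    have huniq := tendsto_nhds_unique hG2' s_u3'
    have hφ''0 : φ'' 0 = (-(lam * u2 0) - u4 0) / ((m:ℝ)-1) := rfl
    rw [hφ''0, hφ0] at huniq
    field_simp at huniq
    linear_combination -huniq
  -- L'Hopital for h = lam*u + m*u2 over r^2
  have ev_h_d : ∀ᶠ r in l, HasDerivAt (fun x => lam * u x + (m:ℝ) * u2 x)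
      (lam * u1 r + (m:ℝ) * u3 r) r := by
    filter_upwards [hE_l] with r hr
    have h := ((hu_d r (hEab r hr)).const_mul lam).add ((hu2_d r (hEab r hr)).const_mul (m:ℝ))
    rw [← hu1def, ← hu3def] at h
    exact h
  have hgg' : ∀ᶠ r in l, HasDerivAt (fun x : ℝ => x^2) (2*r) r :=
    Eventually.of_forall (fun r => by simpa using hasDerivAt_pow 2 r)
  have hg' : ∀ᶠ r in l, 2*r ≠ 0 := by
    filter_upwards [ev_pos] with r hr; positivity
  have hfa : Tendsto (fun r => lam * u r + (m:ℝ) * u2 r) l (nhds 0) := by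
    have h := (c_u.const_mul lam).add (c_u2.const_mul (m:ℝ))
    rwa [show lam * u 0 + (m:ℝ) * u2 0 = 0 from by linarith [fact_p]] at h
  have hga : Tendsto (fun r : ℝ => r^2) l (nhds 0) := by
    have := ((continuous_pow 2).tendsto (0:ℝ)).mono_left (nhdsWithin_le_nhds : l ≤ nhds 0)
    simpa using this
  have hdiv : Tendsto (fun r => (lam * u1 r + (m:ℝ) * u3 r)/(2*r)) l
      (nhds ((lam * u2 0 + (m:ℝ) * u4 0)/2)) := by
    have base : Tendsto (fun r => (lam * (u1 r / r) + (m:ℝ) * (u3 r / r))/2) l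
        (nhds ((lam * u2 0 + (m:ℝ) * u4 0)/2)) :=
      ((s_u1.const_mul lam).add (s_u3'.const_mul (m:ℝ))).div_const 2
    refine base.congr' ?_
    filter_upwards [ev_pos] with r hr
    have : r ≠ 0 := ne_of_gt hr
    field_simp
    try ring
    try exact Or.inl trivial
  rw [hl] at ev_h_d hgg' hg' hfa hga hdiv
  have hlh : Tendsto (fun r => (lam * u r + (m:ℝ) * u2 r)/r^2) l
      (nhds ((lam * u2 0 + (m:ℝ) * u4 0)/2)) := by
    rw [hl]
    exact HasDerivAt.lhopital_zero_nhdsGT ev_h_d hgg' hg' hfa hga hdiv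
  -- final assembly
  have main : Tendsto (fun r => (-(((m:ℝ)-1)⁻¹)) * ((lam * u r + (m:ℝ) * u2 r)/r^2 * (r / sn κ r)^2)) l
      (nhds ((-(((m:ℝ)-1)⁻¹)) * ((lam * u2 0 + (m:ℝ) * u4 0)/2 * 1^2))) :=
    (hlh.mul (s_r_sn.pow 2)).const_mul _
  have main2 : Tendsto
      (fun r => ((m : ℝ) * (deriv (sn κ) r / sn κ r) * u1 r + lam * u r) / (sn κ r) ^ 2) l
      (nhds ((-(((m:ℝ)-1)⁻¹)) * ((lam * u2 0 + (m:ℝ) * u4 0)/2 * 1^2))) := by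
    refine main.congr' ?_
    filter_upwards [hE_l] with r hr
    have hφr := hodeE r hr
    have hrne : r ≠ 0 := ne_of_gt hr.1
    have hsnne : sn κ r ≠ 0 := ne_of_gt (hE_sn r hr)
    rw [show deriv (sn κ) r = cs κ r from (sn_hasDerivAt κ r).deriv]
    have h2 : (m:ℝ) * (cs κ r / sn κ r) * u1 r + lam * u r
        = (-(((m:ℝ)-1)⁻¹)) * (lam * u r + (m:ℝ) * u2 r) := by
      have h3 : (m:ℝ) * (cs κ r / sn κ r * u1 r) = (m:ℝ) * φ r := by rw [hφr]
      have h4 : φ r = (-(lam * u r) - u2 r) / ((m:ℝ)-1) := rfl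
      rw [h4] at h3
      field_simp at h3 ⊢
      linear_combination (m:ℝ) * h3
    rw [mul_comm ((m:ℝ)) (cs κ r / sn κ r)] at h2
    rw [mul_comm ((m:ℝ)) (cs κ r / sn κ r)]
    rw [h2]
    field_simp
  convert main2 using 2
  have hA := fact_p
  have hq := fact_q
  field_simp
  linear_combination (-2*((m:ℝ)-1)*(lam - κ*(m:ℝ))) * hA + ((m:ℝ)^2) * hq
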